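/- Let $B$ be a commutative $\mathbf{k}$-bialgebra, and let $b, c \in B$ with degree-upper bounds $p$ and $q$ respectively, where $p, q \geq -1$ and $p + q \geq -1$. Then $p + q$ is a degree-upper bound of the product $bc$. Consequently, the set $L$ of id-unipotent elements of $B$ is a $\mathbf{k}$-subalgebra of $B$. -/

import Mathlib

open TensorProduct

variable (k : Type*) [CommRing k] (B : Type*) [CommRing B] [Bialgebra k B]

/-- The convolution product `f ⊛ g = μ ∘ (f ⊗ g) ∘ Δ` on `k`-linear maps `B → B`. -/
noncomputable def conv (f g : B →ₗ[k] B) : B →ₗ[k] B :=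
  LinearMap.mul' k B ∘ₗ TensorProduct.map f g ∘ₗ Coalgebra.comul

/-- The unit `η ∘ ε` of the convolution algebra. -/
noncomputable def convOne : B →ₗ[k] B :=
  (Algebra.linearMap k B) ∘ₗ Coalgebra.counit

/-- Convolution powers: `f^{⊛ 0} = η ∘ ε` and `f^{⊛ (n+1)} = f^{⊛ n} ⊛ f`. -/
noncomputable def convPow : ℕ → (B →ₗ[k] B) → (B →ₗ[k] B)
  | 0, _ => convOne k B
  | n + 1, f => conv k B (convPow n f) f

/-- `m` is a degree-upper bound of `b` if `(ηε - id)^{⊛ n} (b) = 0` for every nonnegative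
integer `n > m`. -/
def IsDegreeUpperBound (m : ℤ) (b : B) : Prop :=
  ∀ n : ℕ, m < (n : ℤ) → convPow k B n (convOne k B - LinearMap.id) b = 0

/-- An element `b` is id-unipotent if it has some degree-upper bound. -/
def IdUnipotent (b : B) : Prop := ∃ m : ℤ, IsDegreeUpperBound k B m b

/-! ### Auxiliary development: the convolution ring -/

namespace Stmt15Aux

open LinearMap Coalgebra Polynomial

/-- Basic bilinearity lemmas for `conv`. -/
theorem conv_add_left (f g h : B →ₗ[k] B) :
    conv k B (f + g) h = conv k B f h + conv k B g h := by
  simp only [conv, TensorProduct.map_add_left, LinearMap.add_comp, LinearMap.comp_add]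

theorem conv_add_right (f g h : B →ₗ[k] B) :
    conv k B f (g + h) = conv k B f g + conv k B f h := by
  simp only [conv, TensorProduct.map_add_right, LinearMap.add_comp, LinearMap.comp_add]

theorem conv_zero_left (f : B →ₗ[k] B) : conv k B 0 f = 0 := by
  simp only [conv, TensorProduct.map_zero_left, LinearMap.zero_comp, LinearMap.comp_zero]

theorem conv_zero_right (f : B →ₗ[k] B) : conv k B f 0 = 0 := by
  simp only [conv, TensorProduct.map_zero_right, LinearMap.zero_comp, LinearMap.comp_zero]

theorem one_conv (f : B →ₗ[k] B) : conv k B (convOne k B) f = f := by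
  have hmap : TensorProduct.map (Algebra.linearMap k B ∘ₗ Coalgebra.counit (R := k) (A := B)) f =
      TensorProduct.map (Algebra.linearMap k B) f ∘ₗ
        TensorProduct.map (Coalgebra.counit (R := k) (A := B)) (LinearMap.id (R := k) (M := B)) := by
    rw [← TensorProduct.map_comp, LinearMap.comp_id]
  have hco : TensorProduct.map (Coalgebra.counit (R := k) (A := B)) (LinearMap.id (R := k) (M := B)) ∘ₗ
      Coalgebra.comul = TensorProduct.mk k k B 1 :=
    Coalgebra.rTensor_counit_comp_comul
  ext b
  have hb := LinearMap.congr_fun hco b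
  simp only [LinearMap.comp_apply] at hb
  simp only [conv, _root_.convOne, hmap, LinearMap.comp_apply]
  rw [hb]
  simp [TensorProduct.mk_apply, LinearMap.mul'_apply]

theorem conv_one (f : B →ₗ[k] B) : conv k B f (convOne k B) = f := by
  have hmap : TensorProduct.map f (Algebra.linearMap k B ∘ₗ Coalgebra.counit (R := k) (A := B)) =
      TensorProduct.map f (Algebra.linearMap k B) ∘ₗ
        TensorProduct.map (LinearMap.id (R := k) (M := B)) (Coalgebra.counit (R := k) (A := B)) := by
    rw [← TensorProduct.map_comp, LinearMap.comp_id]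
  have hco : TensorProduct.map (LinearMap.id (R := k) (M := B)) (Coalgebra.counit (R := k) (A := B)) ∘ₗ
      Coalgebra.comul = (TensorProduct.mk k B k).flip 1 :=
    Coalgebra.lTensor_counit_comp_comul
  ext b
  have hb := LinearMap.congr_fun hco b
  simp only [LinearMap.comp_apply] at hb
  simp only [conv, _root_.convOne, hmap, LinearMap.comp_apply]
  rw [hb]
  simp [TensorProduct.mk_apply, LinearMap.mul'_apply]

theorem conv_assoc (f g h : B →ₗ[k] B) :
    conv k B (conv k B f g) h = conv k B f (conv k B g h) := by
  have hmul : LinearMap.mul' k B ∘ₗ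
      TensorProduct.map (LinearMap.mul' k B) (LinearMap.id (R := k) (M := B)) =
      (LinearMap.mul' k B ∘ₗ
        TensorProduct.map (LinearMap.id (R := k) (M := B)) (LinearMap.mul' k B)) ∘ₗ
        (TensorProduct.assoc k B B B).toLinearMap := by
    apply TensorProduct.ext_threefold
    intro x y z
    simp [LinearMap.mul'_apply, mul_assoc]
  have hsplitL : TensorProduct.map (conv k B f g) h =
      TensorProduct.map (LinearMap.mul' k B) (LinearMap.id (R := k) (M := B)) ∘ₗ
        TensorProduct.map (TensorProduct.map f g) h ∘ₗ
          TensorProduct.map (Coalgebra.comul (R := k) (A := B)) (LinearMap.id (R := k) (M := B)) := by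
    rw [← TensorProduct.map_comp, ← TensorProduct.map_comp]
    simp only [LinearMap.comp_id, LinearMap.id_comp]
    rfl
  have hsplitR : TensorProduct.map f (conv k B g h) =
      TensorProduct.map (LinearMap.id (R := k) (M := B)) (LinearMap.mul' k B) ∘ₗ
        TensorProduct.map f (TensorProduct.map g h) ∘ₗ
          TensorProduct.map (LinearMap.id (R := k) (M := B)) (Coalgebra.comul (R := k) (A := B)) := by
    rw [← TensorProduct.map_comp, ← TensorProduct.map_comp]
    simp only [LinearMap.comp_id, LinearMap.id_comp]
    rfl
  have hco : TensorProduct.map (LinearMap.id (R := k) (M := B)) (Coalgebra.comul (R := k) (A := B)) ∘ₗ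
      Coalgebra.comul =
      (TensorProduct.assoc k B B B).toLinearMap ∘ₗ
        TensorProduct.map (Coalgebra.comul (R := k) (A := B)) (LinearMap.id (R := k) (M := B)) ∘ₗ
          Coalgebra.comul :=
    (Coalgebra.coassoc (R := k) (A := B)).symm
  show LinearMap.mul' k B ∘ₗ TensorProduct.map (conv k B f g) h ∘ₗ Coalgebra.comul =
    LinearMap.mul' k B ∘ₗ TensorProduct.map f (conv k B g h) ∘ₗ Coalgebra.comul
  rw [hsplitL, hsplitR]
  apply LinearMap.ext
  intro b
  simp only [LinearMap.comp_apply]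
  have e1 := LinearMap.congr_fun hco b
  simp only [LinearMap.comp_apply, LinearEquiv.coe_coe] at e1
  rw [e1]
  rw [show ∀ w, TensorProduct.map f (TensorProduct.map g h)
      (TensorProduct.assoc k B B B w) =
      TensorProduct.assoc k B B B (TensorProduct.map (TensorProduct.map f g) h w) from
    fun w => TensorProduct.map_map_assoc f g h w]
  have e3 := LinearMap.congr_fun hmul
    (TensorProduct.map (TensorProduct.map f g) h
      (TensorProduct.map (Coalgebra.comul (R := k) (A := B)) (LinearMap.id (R := k) (M := B))
        (Coalgebra.comul (R := k) (A := B) b)))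
  simp only [LinearMap.comp_apply, LinearEquiv.coe_coe] at e3
  rw [← e3]

/-- Type synonym carrying the convolution ring structure. -/
def CF : Type _ := B →ₗ[k] B

instance : AddCommGroup (CF k B) := inferInstanceAs (AddCommGroup (B →ₗ[k] B))

/-- Identity map into the synonym. -/
def toCF : (B →ₗ[k] B) → CF k B := fun f => f

/-- Identity map out of the synonym. -/
def ofCF : CF k B → (B →ₗ[k] B) := fun f => f

noncomputable instance : Ring (CF k B) :=
  { (inferInstance : AddCommGroup (B →ₗ[k] B)) with
    mul := fun f g => toCF k B (conv k B (ofCF k B f) (ofCF k B g))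
    one := toCF k B (convOne k B)
    mul_assoc := fun f g h => conv_assoc k B (ofCF k B f) (ofCF k B g) (ofCF k B h)
    one_mul := fun f => one_conv k B (ofCF k B f)
    mul_one := fun f => conv_one k B (ofCF k B f)
    left_distrib := fun f g h => conv_add_right k B (ofCF k B f) (ofCF k B g) (ofCF k B h)
    right_distrib := fun f g h => conv_add_left k B (ofCF k B f) (ofCF k B g) (ofCF k B h)
    zero_mul := fun f => conv_zero_left k B (ofCF k B f)
    mul_zero := fun f => conv_zero_right k B (ofCF k B f) }

theorem ofCF_mul (f g : CF k B) :
    ofCF k B (f * g) = conv k B (ofCF k B f) (ofCF k B g) := rfl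

theorem ofCF_one : ofCF k B 1 = convOne k B := rfl

theorem ofCF_sub (f g : CF k B) : ofCF k B (f - g) = ofCF k B f - ofCF k B g := rfl

theorem convPow_eq (f : B →ₗ[k] B) (n : ℕ) :
    convPow k B n f = ofCF k B ((toCF k B f) ^ n) := by
  induction n with
  | zero => rw [pow_zero]; rfl
  | succ n ih =>
    show conv k B (convPow k B n f) f = _
    rw [ih, pow_succ]
    rfl

/-- The distinguished elements. -/
noncomputable def Ee : CF k B := toCF k B (convOne k B - LinearMap.id)

noncomputable def Ii : CF k B := toCF k B LinearMap.id

theorem Ee_eq : Ee k B = 1 - Ii k B := rfl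

theorem Ii_eq : Ii k B = 1 - Ee k B := by rw [Ee_eq]; exact (sub_sub_cancel _ _).symm

theorem convPow_e_eq (n : ℕ) :
    convPow k B n (convOne k B - LinearMap.id) = ofCF k B ((Ee k B) ^ n) :=
  convPow_eq k B _ n

theorem commute_Ee_Ii : Commute (Ee k B) (Ii k B) := by
  rw [Ee_eq]
  exact (Commute.one_left (Ii k B)).sub_left (Commute.refl (Ii k B))

/-- `ψ f g = μ ∘ (f ⊗ g) : B ⊗ B → B`. -/
noncomputable def psi (f g : B →ₗ[k] B) : B ⊗[k] B →ₗ[k] B :=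
  LinearMap.mul' k B ∘ₗ TensorProduct.map f g

theorem psi_tmul (f g : B →ₗ[k] B) (x y : B) :
    psi k B f g (x ⊗ₜ[k] y) = f x * g y := by
  simp [psi, LinearMap.mul'_apply]

theorem psi_zero_left (g : B →ₗ[k] B) : psi k B 0 g = 0 := by
  simp [psi, TensorProduct.map_zero_left]

theorem psi_add_left (f₁ f₂ g : B →ₗ[k] B) :
    psi k B (f₁ + f₂) g = psi k B f₁ g + psi k B f₂ g := by
  simp [psi, TensorProduct.map_add_left, LinearMap.comp_add]

/-- The comultiplication on `B ⊗ B` (no axioms needed). -/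
noncomputable def comulT : B ⊗[k] B →ₗ[k] (B ⊗[k] B) ⊗[k] (B ⊗[k] B) :=
  (tensorTensorTensorComm k B B B B).toLinearMap ∘ₗ
    TensorProduct.map Coalgebra.comul Coalgebra.comul

/-- Convolution on maps `B ⊗ B → B`. -/
noncomputable def convT (F G : B ⊗[k] B →ₗ[k] B) : B ⊗[k] B →ₗ[k] B :=
  LinearMap.mul' k B ∘ₗ TensorProduct.map F G ∘ₗ comulT k B

theorem convT_add_left (F G H : B ⊗[k] B →ₗ[k] B) :
    convT k B (F + G) H = convT k B F H + convT k B G H := by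
  simp [convT, TensorProduct.map_add_left, LinearMap.add_comp, LinearMap.comp_add]

theorem convT_add_right (F G H : B ⊗[k] B →ₗ[k] B) :
    convT k B F (G + H) = convT k B F G + convT k B F H := by
  simp [convT, TensorProduct.map_add_right, LinearMap.add_comp, LinearMap.comp_add]

theorem aux_mu (f g : B →ₗ[k] B) (u v : B ⊗[k] B) :
    LinearMap.mul' k B (TensorProduct.map f g (u * v)) =
      LinearMap.mul' k B
        (TensorProduct.map (f ∘ₗ LinearMap.mul' k B) (g ∘ₗ LinearMap.mul' k B)
          (tensorTensorTensorComm k B B B B (u ⊗ₜ[k] v))) := by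
  induction u using TensorProduct.induction_on with
  | zero => simp
  | add u₁ u₂ h₁ h₂ => simp [add_mul, add_tmul, h₁, h₂]
  | tmul a b' =>
    induction v using TensorProduct.induction_on with
    | zero => simp
    | add v₁ v₂ h₁ h₂ => simp [mul_add, tmul_add, h₁, h₂]
    | tmul c d =>
      simp [Algebra.TensorProduct.tmul_mul_tmul, LinearMap.mul'_apply]

theorem conv_comp_mul (f g : B →ₗ[k] B) :
    conv k B f g ∘ₗ LinearMap.mul' k B =
      convT k B (f ∘ₗ LinearMap.mul' k B) (g ∘ₗ LinearMap.mul' k B) := by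
  apply TensorProduct.ext'
  intro x y
  simp only [conv, convT, comulT, LinearMap.comp_apply, LinearMap.mul'_apply,
    TensorProduct.map_tmul, LinearEquiv.coe_coe]
  rw [Bialgebra.comul_mul]
  exact aux_mu k B f g _ _

theorem aux_psi (f g f' g' : B →ₗ[k] B) (u v : B ⊗[k] B) :
    LinearMap.mul' k B
      (TensorProduct.map (psi k B f g) (psi k B f' g')
        (tensorTensorTensorComm k B B B B (u ⊗ₜ[k] v))) =
    LinearMap.mul' k B (TensorProduct.map f f' u) *
      LinearMap.mul' k B (TensorProduct.map g g' v) := by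
  induction u using TensorProduct.induction_on with
  | zero => simp
  | add u₁ u₂ h₁ h₂ => simp [add_tmul, h₁, h₂, add_mul]
  | tmul a b' =>
    induction v using TensorProduct.induction_on with
    | zero => simp
    | add v₁ v₂ h₁ h₂ => simp [tmul_add, h₁, h₂, mul_add]
    | tmul c d =>
      simp only [tensorTensorTensorComm_tmul, TensorProduct.map_tmul,
        LinearMap.mul'_apply, psi_tmul]
      exact mul_mul_mul_comm _ _ _ _

theorem convT_psi (f g f' g' : B →ₗ[k] B) :
    convT k B (psi k B f g) (psi k B f' g') =
      psi k B (conv k B f f') (conv k B g g') := by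
  apply TensorProduct.ext'
  intro x y
  simp only [convT, comulT, psi, conv, LinearMap.comp_apply, TensorProduct.map_tmul,
    LinearEquiv.coe_coe]
  exact aux_psi k B f g f' g' _ _

theorem one_comp_mul :
    convOne k B ∘ₗ LinearMap.mul' k B = psi k B (convOne k B) (convOne k B) := by
  apply TensorProduct.ext'
  intro x y
  simp [_root_.convOne, psi, LinearMap.mul'_apply, Bialgebra.counit_mul, map_mul]

theorem e_comp_mul :
    (convOne k B - LinearMap.id) ∘ₗ LinearMap.mul' k B =
      psi k B (convOne k B - LinearMap.id) (convOne k B) +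
        psi k B LinearMap.id (convOne k B - LinearMap.id) := by
  apply TensorProduct.ext'
  intro x y
  simp only [LinearMap.comp_apply, LinearMap.mul'_apply, LinearMap.add_apply, psi_tmul,
    LinearMap.sub_apply, LinearMap.id_apply, _root_.convOne, Bialgebra.counit_mul,
    Algebra.linearMap_apply, map_mul]
  ring

/-- The evaluation of a polynomial over the convolution ring as a map `B ⊗ B → B`:
`monomial j a ↦ ψ a e^j`. -/
noncomputable def Xi : Polynomial (CF k B) → (B ⊗[k] B →ₗ[k] B) := fun P =>
  P.sum fun j a => psi k B (ofCF k B a) (ofCF k B ((Ee k B) ^ j))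

theorem Xi_zero : Xi k B 0 = 0 := Polynomial.sum_zero_index _

theorem Xi_monomial (j : ℕ) (a : CF k B) :
    Xi k B (Polynomial.monomial j a) = psi k B (ofCF k B a) (ofCF k B ((Ee k B) ^ j)) := by
  refine Polynomial.sum_monomial_index a _ ?_
  show psi k B (ofCF k B 0) _ = 0
  exact psi_zero_left k B _

theorem Xi_add (P Q : Polynomial (CF k B)) : Xi k B (P + Q) = Xi k B P + Xi k B Q := by
  refine Polynomial.sum_add_index P Q _ (fun i => ?_) (fun i a b => ?_)
  · show psi k B (ofCF k B 0) _ = 0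
    exact psi_zero_left k B _
  · show psi k B (ofCF k B (a + b)) _ = _
    exact psi_add_left k B _ _ _

/-- `Xi` as an additive monoid hom. -/
noncomputable def XiHom : Polynomial (CF k B) →+ (B ⊗[k] B →ₗ[k] B) where
  toFun := Xi k B
  map_zero' := Xi_zero k B
  map_add' := Xi_add k B

theorem Xi_mul (P Q : Polynomial (CF k B)) :
    Xi k B (P * Q) = convT k B (Xi k B P) (Xi k B Q) := by
  induction P using Polynomial.induction_on' with
  | add p q hp hq => rw [add_mul, Xi_add, Xi_add, hp, hq, convT_add_left]
  | monomial i a =>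
    induction Q using Polynomial.induction_on' with
    | add p q hp hq => rw [mul_add, Xi_add, Xi_add, hp, hq, convT_add_right]
    | monomial j b =>
      rw [Polynomial.monomial_mul_monomial, Xi_monomial, Xi_monomial, Xi_monomial, convT_psi]
      congr 1
      rw [pow_add]
      rfl

theorem e_mu_Xi :
    (convOne k B - LinearMap.id) ∘ₗ LinearMap.mul' k B =
      Xi k B (Polynomial.C (Ee k B) + Polynomial.C (Ii k B) * Polynomial.X) := by
  rw [← Polynomial.monomial_zero_left, Polynomial.C_mul_X_eq_monomial, Xi_add,
    Xi_monomial, Xi_monomial, pow_zero, pow_one]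
  exact e_comp_mul k B

theorem mu_pow (n : ℕ) :
    convPow k B n (convOne k B - LinearMap.id) ∘ₗ LinearMap.mul' k B =
      Xi k B ((Polynomial.C (Ee k B) + Polynomial.C (Ii k B) * Polynomial.X) ^ n) := by
  induction n with
  | zero =>
    show convOne k B ∘ₗ LinearMap.mul' k B = _
    rw [pow_zero, ← Polynomial.monomial_zero_one, Xi_monomial, pow_zero]
    exact one_comp_mul k B
  | succ n ih =>
    show conv k B (convPow k B n (convOne k B - LinearMap.id)) (convOne k B - LinearMap.id)
        ∘ₗ LinearMap.mul' k B = _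
    rw [conv_comp_mul, ih, e_mu_Xi, ← Xi_mul, ← pow_succ]

theorem Q_pow (n : ℕ) :
    (Polynomial.C (Ee k B) + Polynomial.C (Ii k B) * Polynomial.X) ^ n =
      ∑ i ∈ Finset.range (n + 1),
        (n.choose i) •
          Polynomial.monomial (n - i) ((Ee k B) ^ i * (Ii k B) ^ (n - i)) := by
  have hc : Commute (Polynomial.C (Ee k B)) (Polynomial.C (Ii k B) * Polynomial.X) :=
    ((commute_Ee_Ii k B).map Polynomial.C).mul_right
      (Polynomial.commute_X (Polynomial.C (Ee k B))).symm
  rw [hc.add_pow]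
  refine Finset.sum_congr rfl fun i _ => ?_
  rw [(Polynomial.commute_X (Polynomial.C (Ii k B))).symm.mul_pow, ← map_pow, ← map_pow,
    ← mul_assoc, ← map_mul, Polynomial.C_mul_X_pow_eq_monomial,
    (Nat.cast_commute (n.choose i)
      (Polynomial.monomial (n - i) ((Ee k B) ^ i * (Ii k B) ^ (n - i)))).symm.eq,
    ← nsmul_eq_mul]

theorem expand (n : ℕ) (b c : B) :
    convPow k B n (convOne k B - LinearMap.id) (b * c) =
      ∑ i ∈ Finset.range (n + 1),
        (n.choose i) •
          ((ofCF k B ((Ee k B) ^ i * (Ii k B) ^ (n - i))) b *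
            (ofCF k B ((Ee k B) ^ (n - i))) c) := by
  have h := LinearMap.congr_fun (mu_pow k B n) (b ⊗ₜ[k] c)
  rw [LinearMap.comp_apply, LinearMap.mul'_apply] at h
  rw [h, Q_pow]
  rw [show (Xi k B : Polynomial (CF k B) → (B ⊗[k] B →ₗ[k] B)) = XiHom k B from rfl,
    map_sum]
  simp only [map_nsmul]
  rw [show ((XiHom k B : Polynomial (CF k B) →+ (B ⊗[k] B →ₗ[k] B)) :
      Polynomial (CF k B) → (B ⊗[k] B →ₗ[k] B)) = Xi k B from rfl]
  simp only [Xi_monomial]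
  rw [LinearMap.coe_sum, Finset.sum_apply]
  refine Finset.sum_congr rfl fun i _ => ?_
  rw [LinearMap.smul_apply, psi_tmul]

theorem vanish (x : B) (p : ℤ) (h : IsDegreeUpperBound k B p x) :
    ∀ j i : ℕ, p < (i : ℤ) → (ofCF k B ((Ee k B) ^ i * (Ii k B) ^ j)) x = 0 := by
  intro j
  induction j with
  | zero =>
    intro i hi
    rw [pow_zero, mul_one, ← convPow_e_eq]
    exact h i hi
  | succ j ih =>
    intro i hi
    have h2 : (Ee k B) ^ i * (Ii k B) ^ j * Ee k B = (Ee k B) ^ (i + 1) * (Ii k B) ^ j := by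
      rw [mul_assoc, ← ((commute_Ee_Ii k B).pow_right j).eq, ← mul_assoc, ← pow_succ]
    have key : (Ee k B) ^ i * (Ii k B) ^ (j + 1) =
        (Ee k B) ^ i * (Ii k B) ^ j - (Ee k B) ^ (i + 1) * (Ii k B) ^ j := by
      rw [pow_succ, ← mul_assoc]
      nth_rewrite 2 [Ii_eq]
      rw [mul_sub, mul_one, h2]
    rw [key, ofCF_sub, LinearMap.sub_apply, ih i hi, ih (i + 1) (by push_cast; omega),
      sub_zero]

theorem prod_bound (b c : B) (p q : ℤ)
    (hb : IsDegreeUpperBound k B p b) (hc : IsDegreeUpperBound k B q c) :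
    IsDegreeUpperBound k B (p + q) (b * c) := by
  intro n hn
  rw [expand]
  apply Finset.sum_eq_zero
  intro i hi
  have hin : i ≤ n := Nat.lt_succ_iff.mp (Finset.mem_range.mp hi)
  rcases lt_or_ge q ((n - i : ℕ) : ℤ) with h | h
  · have hz : (ofCF k B ((Ee k B) ^ (n - i))) c = 0 := by
      rw [← convPow_e_eq]
      exact hc _ h
    rw [hz, mul_zero, smul_zero]
  · have hcast : ((n - i : ℕ) : ℤ) = (n : ℤ) - (i : ℤ) := by
      push_cast [hin]; ring
    have hi' : p < (i : ℤ) := by omega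
    rw [vanish k B b p hb (n - i) i hi', zero_mul, smul_zero]

theorem bound_mono (m m' : ℤ) (x : B) (h : m ≤ m') (hx : IsDegreeUpperBound k B m x) :
    IsDegreeUpperBound k B m' x := fun n hn => hx n (by omega)

theorem one_bound : IsDegreeUpperBound k B 0 (1 : B) := by
  intro n hn
  match n, hn with
  | (m + 1), _ =>
    show conv k B (convPow k B m (convOne k B - LinearMap.id)) (convOne k B - LinearMap.id) 1 = 0
    have h1 : Coalgebra.comul (R := k) (1 : B) = (1 : B) ⊗ₜ[k] (1 : B) := by
      rw [Bialgebra.comul_one]; rfl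
    simp only [conv, LinearMap.comp_apply, h1, TensorProduct.map_tmul, LinearMap.mul'_apply]
    have h2 : ((convOne k B - LinearMap.id : B →ₗ[k] B)) (1 : B) = 0 := by
      simp [_root_.convOne, Bialgebra.counit_one]
    rw [h2, mul_zero]

end Stmt15Aux

/-- **Proposition.** Let `B` be a commutative `k`-bialgebra and `b, c ∈ B` with degree-upper
bounds `p` and `q` respectively, where `p, q ≥ -1` and `p + q ≥ -1`.  Then `p + q` is a
degree-upper bound of `b * c`.  Consequently, the set `L` of id-unipotent elements of `B`
is a `k`-subalgebra of `B`. -/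
theorem stmt15 (b c : B) (p q : ℤ) (hp : -1 ≤ p) (hq : -1 ≤ q) (hpq : -1 ≤ p + q)
    (hb : IsDegreeUpperBound k B p b) (hc : IsDegreeUpperBound k B q c) :
    IsDegreeUpperBound k B (p + q) (b * c) ∧
    ∃ S : Subalgebra k B, (S : Set B) = {x : B | IdUnipotent k B x} := by
  constructor
  · exact Stmt15Aux.prod_bound k B b c p q hb hc
  · refine ⟨{ carrier := {x : B | IdUnipotent k B x}
              mul_mem' := ?_
              one_mem' := ⟨0, Stmt15Aux.one_bound k B⟩
              add_mem' := ?_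
              zero_mem' := ⟨0, fun n _ => map_zero _⟩
              algebraMap_mem' := ?_ }, rfl⟩
    · rintro x y ⟨m₁, hm₁⟩ ⟨m₂, hm₂⟩
      refine ⟨max m₁ 0 + max m₂ 0, Stmt15Aux.prod_bound k B x y _ _ ?_ ?_⟩
      · exact Stmt15Aux.bound_mono k B m₁ _ x (le_max_left _ _) hm₁
      · exact Stmt15Aux.bound_mono k B m₂ _ y (le_max_left _ _) hm₂
    · rintro x y ⟨m₁, hm₁⟩ ⟨m₂, hm₂⟩
      refine ⟨max m₁ m₂, fun n hn => ?_⟩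
      rw [map_add, hm₁ n (by omega), hm₂ n (by omega), add_zero]
    · intro r
      refine ⟨0, fun n hn => ?_⟩
      rw [Algebra.algebraMap_eq_smul_one, map_smul, Stmt15Aux.one_bound k B n hn, smul_zero]
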